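/- arXiv:2501.00214 — 2 statements merged into one kernel-verified Lean document; each statement's English description precedes it below -/
import Mathlib

section
/- Let split be a function assigning to every finite set T of nodes a pair of finite sets (split(T).1, split(T).2) such that for every T the two parts are disjoint, their union is T, and |split(T).1| = ⌊|T|/2⌋ (hence |split(T).2| = ⌈|T|/2⌉). Let F be a finite set of faulty nodes and let S be a finite set with good resilience with respect to F, i.e. 3·|S ∩ F| < |S|. Then there exists a sequence of finite sets T : ℕ → Finset such that T(0) = S, for every r the set T(r+1) equals split(T(r)).1 or split(T(r)).2, and every T(r) has good resilience with respect to F, i.e. 3·|T(r) ∩ F| < |T(r)| for all r. -/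
/-- Given a balanced-splitting function `split` on finite sets of nodes and a
faulty set `F`, any finite set `S` with good resilience (`3·|S ∩ F| < |S|`)
admits an infinite network chain `T 0 = S, T 1, T 2, …` in which each set is
one of the two balanced halves of the previous one and every set in the chain
has good resilience. -/
theorem exists_good_resilience_chain {α : Type*} [DecidableEq α]
    (split : Finset α → Finset α × Finset α)
    (hdisj : ∀ T : Finset α, Disjoint (split T).1 (split T).2)
    (hunion : ∀ T : Finset α, (split T).1 ∪ (split T).2 = T)
    (hhalf : ∀ T : Finset α, (split T).1.card = T.card / 2)
    (F S : Finset α)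
    (hgood : 3 * (S ∩ F).card < S.card) :
    ∃ T : ℕ → Finset α,
      T 0 = S ∧
      (∀ r : ℕ, T (r + 1) = (split (T r)).1 ∨ T (r + 1) = (split (T r)).2) ∧
      (∀ r : ℕ, 3 * (T r ∩ F).card < (T r).card) := by
  classical
  -- One of the two halves is always good.
  have key : ∀ U : Finset α, 3 * (U ∩ F).card < U.card →
      3 * (((split U).1 : Finset α) ∩ F).card < (split U).1.card ∨
      3 * (((split U).2 : Finset α) ∩ F).card < (split U).2.card := by
    intro U hU
    by_contra h
    push_neg at h
    obtain ⟨h1, h2⟩ := h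
    have hcard : (split U).1.card + (split U).2.card = U.card := by
      rw [← Finset.card_union_of_disjoint (hdisj U), hunion U]
    have hint : ((split U).1 ∩ F).card + ((split U).2 ∩ F).card = (U ∩ F).card := by
      rw [← Finset.card_union_of_disjoint
        ((hdisj U).mono Finset.inter_subset_left Finset.inter_subset_left),
        ← Finset.union_inter_distrib_right, hunion U]
    omega
  let T : ℕ → Finset α := fun n => Nat.rec S (fun _ U =>
    if 3 * (((split U).1 : Finset α) ∩ F).card < (split U).1.card
    then (split U).1 else (split U).2) n
  have hTsucc : ∀ n, T (n + 1) =
      if 3 * (((split (T n)).1 : Finset α) ∩ F).card < (split (T n)).1.card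
      then (split (T n)).1 else (split (T n)).2 := fun n => rfl
  have hgoodT : ∀ n, 3 * (T n ∩ F).card < (T n).card := by
    intro n
    induction n with
    | zero => exact hgood
    | succ n ih =>
      rw [hTsucc n]
      rcases key (T n) ih with h | h
      · rw [if_pos h]; exact h
      · split_ifs with h'
        · exact h'
        · exact h
  exact ⟨T, rfl, fun r => by rw [hTsucc r]; split_ifs <;> simp, hgoodT⟩
end

section
/- Let split be a function assigning to every finite set T of nodes a pair of finite sets (split(T).1, split(T).2) such that for every T the two parts are disjoint, their union is T, and |split(T).1| = ⌊|T|/2⌋ (hence |split(T).2| = ⌈|T|/2⌉). Let F be a finite set of faulty nodes and let S be a finite set with 3·|S ∩ F| < |S| and |S| ≤ M·2^J for naturals M and J. Then there exists a finite chain S = T(0), T(1), …, T(J) of finite sets such that for every r < J the set T(r+1) equals split(T(r)).1 or split(T(r)).2, every T(r) satisfies 3·|T(r) ∩ F| < |T(r)|, and the final set satisfies |T(J)| ≤ M. -/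
/-- Given a balanced-splitting function `split` on finite sets of nodes and a
faulty set `F`, any finite set `S` with good resilience (`3·|S ∩ F| < |S|`)
and `|S| ≤ M · 2^J` admits a finite network chain `S = T 0, T 1, …, T J` in
which each set is one of the two balanced halves of the previous one, every
set in the chain has good resilience, and the final set has size at most `M`. -/
theorem exists_finite_good_resilience_chain {α : Type*} [DecidableEq α]
    (split : Finset α → Finset α × Finset α)
    (hdisj : ∀ T : Finset α, Disjoint (split T).1 (split T).2)
    (hunion : ∀ T : Finset α, (split T).1 ∪ (split T).2 = T)
    (hhalf : ∀ T : Finset α, (split T).1.card = T.card / 2)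
    (F S : Finset α) (M J : ℕ)
    (hgood : 3 * (S ∩ F).card < S.card)
    (hsize : S.card ≤ M * 2 ^ J) :
    ∃ T : ℕ → Finset α,
      T 0 = S ∧
      (∀ r : ℕ, r < J → (T (r + 1) = (split (T r)).1 ∨ T (r + 1) = (split (T r)).2)) ∧
      (∀ r : ℕ, r ≤ J → 3 * (T r ∩ F).card < (T r).card) ∧
      (T J).card ≤ M := by
  classical
  -- define the chain, always picking a half with good resilience
  let T : ℕ → Finset α := fun n => Nat.rec S
    (fun _ U => if 3 * ((split U).1 ∩ F).card < (split U).1.card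
      then (split U).1 else (split U).2) n
  have hT0 : T 0 = S := rfl
  have hTsucc : ∀ r, T (r + 1) =
      (if 3 * ((split (T r)).1 ∩ F).card < (split (T r)).1.card
        then (split (T r)).1 else (split (T r)).2) := fun r => rfl
  -- card splitting facts
  have hcards : ∀ U : Finset α, (split U).1.card + (split U).2.card = U.card := by
    intro U
    rw [← Finset.card_union_of_disjoint (hdisj U), hunion U]
  have hcardF : ∀ U : Finset α,
      ((split U).1 ∩ F).card + ((split U).2 ∩ F).card = (U ∩ F).card := by
    intro U
    have hd : Disjoint ((split U).1 ∩ F) ((split U).2 ∩ F) :=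
      (hdisj U).mono Finset.inter_subset_left Finset.inter_subset_left
    rw [← Finset.card_union_of_disjoint hd, ← Finset.union_inter_distrib_right, hunion U]
  -- goodness is preserved
  have hstep : ∀ r, 3 * (T r ∩ F).card < (T r).card →
      3 * (T (r + 1) ∩ F).card < (T (r + 1)).card := by
    intro r hg
    rw [hTsucc r]
    by_cases h : 3 * ((split (T r)).1 ∩ F).card < (split (T r)).1.card
    · simp [h]
    · simp only [h, if_false]
      have h1 := hcards (T r)
      have h2 := hcardF (T r)
      omega
  have hgoodall : ∀ r, 3 * (T r ∩ F).card < (T r).card := by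
    intro r
    induction r with
    | zero => exact hgood
    | succ n ih => exact hstep n ih
  -- size bound
  have hsizebound : ∀ r, r ≤ J → (T r).card ≤ M * 2 ^ (J - r) := by
    intro r hr
    induction r with
    | zero => simpa [hT0] using hsize
    | succ n ih =>
      have hn : n ≤ J := Nat.le_of_succ_le hr
      have ihn := ih hn
      have hhalfcard : (T (n + 1)).card ≤ ((T n).card + 1) / 2 := by
        rw [hTsucc n]
        have h1 := hcards (T n)
        have h2 := hhalf (T n)
        by_cases h : 3 * ((split (T n)).1 ∩ F).card < (split (T n)).1.card
        · simp only [h, if_true]; omega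
        · simp only [h, if_false]; omega
      have hexp : M * 2 ^ (J - n) = 2 * (M * 2 ^ (J - (n + 1))) := by
        have : J - n = (J - (n + 1)) + 1 := by omega
        rw [this, pow_succ]; ring
      omega
  refine ⟨T, hT0, ?_, fun r _ => hgoodall r, ?_⟩
  · intro r _
    rw [hTsucc r]
    by_cases h : 3 * ((split (T r)).1 ∩ F).card < (split (T r)).1.card
    · left; simp [h]
    · right; simp [h]
  · simpa using hsizebound J le_rfl
end
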